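/- arXiv:2303.07923 — 3 statements merged into one kernel-verified Lean document; each statement's English description precedes it below -/
import Mathlib

section
/- Let G = (V, E) be a graph with |V| = n, and let G' be obtained from G by adding a set V_a of k·n² new vertices, each adjacent to every vertex of V (and to no vertex of V_a). Let dist be the shortest-path metric of G'. If G has a dominating set of size k, then there exist k vertices v₁, …, v_k ∈ V such that every vertex of V ∪ V_a is within distance 1 of some v_i, and the vertices of V ∪ V_a can be partitioned into k parts P₁, …, P_k with P_i ⊆ B(v_i, 1) and |P_i| ≤ n² + n for each i. -/
/-!
Enumerate the dominating set as centres `v₁, …, v_k`. Send each vertex of `V` to the part of a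
centre dominating it (at most `n` vertices per part), and split the `k n²` new vertices into `k`
consecutive blocks of `n²`. Every new vertex is adjacent to every vertex of `V`, so each part lies
in the unit ball of its centre.
-/

/-- The join of a graph `G` with a set `A` of new universal vertices: vertices of `V` keep
their adjacencies, every vertex of `A` is adjacent to every vertex of `V`, and no two
vertices of `A` are adjacent. -/
def joinGraph {V : Type*} (A : Type*) (G : SimpleGraph V) : SimpleGraph (V ⊕ A) where
  Adj x y :=
    match x, y with
    | Sum.inl u, Sum.inl v => G.Adj u v
    | Sum.inl _, Sum.inr _ => True
    | Sum.inr _, Sum.inl _ => True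
    | Sum.inr _, Sum.inr _ => False
  symm := by
    constructor
    rintro (u | a) (v | b) h
    · exact G.adj_symm h
    · trivial
    · trivial
    · exact h.elim
  loopless := by
    constructor
    rintro (u | a) h
    · exact G.loopless.irrefl u h
    · exact h.elim

open Finset

theorem SimpleGraph.dist_le_one_of_eq_or_adj {W : Type*} {G : SimpleGraph W} {u v : W}
    (h : u = v ∨ G.Adj u v) : G.dist u v ≤ 1 := by
  rcases h with rfl | h
  · simp
  · exact (dist_eq_one_iff_adj.2 h).le

theorem card_filter_sumElim_eq {α β ι : Type*} [Fintype α] [Fintype β] [DecidableEq ι]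
    (g : α → ι) (h : β → ι) (i : ι) :
    #{x | Sum.elim g h x = i} = #{a | g a = i} + #{b | h b = i} := by
  simp only [card_filter, Fintype.sum_sum_type, Sum.elim_inl, Sum.elim_inr]
  rfl

theorem Fin.card_filter_divNat_eq (k m : ℕ) (i : Fin k) :
    #{a : Fin (k * m) | a.divNat = i} = m := by
  have hdiv (p : Fin k × Fin m) : (finProdFinEquiv p).divNat = p.1 :=
    congrArg Prod.fst (finProdFinEquiv.symm_apply_apply p)
  rw [card_filter, ← finProdFinEquiv.sum_comp, Fintype.sum_prod_type]
  simp [hdiv]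

section Join

variable {V A ι : Type*} (G : SimpleGraph V)

theorem exists_centers_of_dominating {k : ℕ} {D : Finset V} (hD : #D = k)
    (hdom : ∀ v : V, ∃ u ∈ D, u = v ∨ G.Adj u v) :
    ∃ (e : Fin k → V) (c : V → Fin k), ∀ x, e (c x) = x ∨ G.Adj (e (c x)) x := by
  let σ := D.equivFinOfCardEq hD
  choose u hu hdom using hdom
  exact ⟨fun i => σ.symm i, fun x => σ ⟨u x, hu x⟩, by simpa using hdom⟩

theorem joinGraph_dist_sumElim_le_one {e : ι → V} {c : V → ι}
    (hc : ∀ x, e (c x) = x ∨ G.Adj (e (c x)) x) (b : A → ι) (x : V ⊕ A) :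
    (joinGraph A G).dist (Sum.inl (e (Sum.elim c b x))) x ≤ 1 := by
  apply SimpleGraph.dist_le_one_of_eq_or_adj
  rcases x with x | a
  · exact (hc x).imp (congrArg Sum.inl) id
  · exact Or.inr trivial

end Join

theorem stmt5_general {V : Type*} [Fintype V] (G : SimpleGraph V)
    (n k : ℕ) (hn : Fintype.card V = n)
    (D : Finset V) (hD : D.card = k)
    (hdom : ∀ v : V, ∃ u ∈ D, u = v ∨ G.Adj u v) :
    ∃ (v : Fin k → V) (P : Fin k → Finset (V ⊕ Fin (k * n ^ 2))),
      (∀ x : V ⊕ Fin (k * n ^ 2), ∃ i, (joinGraph (Fin (k * n ^ 2)) G).dist (Sum.inl (v i)) x ≤ 1) ∧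
      (∀ x : V ⊕ Fin (k * n ^ 2), ∃ i, x ∈ P i) ∧
      (∀ i j, i ≠ j → Disjoint (P i) (P j)) ∧
      (∀ i, ∀ x ∈ P i, (joinGraph (Fin (k * n ^ 2)) G).dist (Sum.inl (v i)) x ≤ 1) ∧
      (∀ i, (P i).card ≤ n ^ 2 + n) := by
  obtain ⟨e, c, hc⟩ := exists_centers_of_dominating G hD hdom
  let part : V ⊕ Fin (k * n ^ 2) → Fin k := Sum.elim c Fin.divNat
  have hball := joinGraph_dist_sumElim_le_one G hc (Fin.divNat (n := n ^ 2))
  refine ⟨e, fun i => {x | part x = i}, fun x => ⟨part x, hball x⟩,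
    fun x => ⟨part x, by simp⟩, fun i j hij => disjoint_filter.2 fun x _ hi hj => hij (hi ▸ hj),
    fun i x hx => (mem_filter.1 hx).2 ▸ hball x, fun i => ?_⟩
  calc #{x | part x = i} = #{x | c x = i} + #{a : Fin (k * n ^ 2) | a.divNat = i} :=
        card_filter_sumElim_eq c Fin.divNat i
    _ ≤ n + n ^ 2 := by
        rw [Fin.card_filter_divNat_eq]
        exact Nat.add_le_add_right (hn ▸ card_le_univ _) _
    _ = n ^ 2 + n := Nat.add_comm _ _

/-- If `G` has a dominating set of size `k`, then in the augmented graph `G'` (with `k·n²`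
universal vertices added) there are `k` centers in `V` whose radius-1 balls cover everything,
together with a partition into parts of size at most `n² + n` each contained in the
corresponding ball. -/
theorem stmt5 {V : Type*} [Fintype V] [DecidableEq V] (G : SimpleGraph V)
    (n k : ℕ) (hn : Fintype.card V = n) (hk : 1 ≤ k)
    (D : Finset V) (hD : D.card = k)
    (hdom : ∀ v : V, ∃ u ∈ D, u = v ∨ G.Adj u v) :
    ∃ (v : Fin k → V) (P : Fin k → Finset (V ⊕ Fin (k * n ^ 2))),
      (∀ x : V ⊕ Fin (k * n ^ 2), ∃ i, (joinGraph (Fin (k * n ^ 2)) G).dist (Sum.inl (v i)) x ≤ 1) ∧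
      (∀ x : V ⊕ Fin (k * n ^ 2), ∃ i, x ∈ P i) ∧
      (∀ i j, i ≠ j → Disjoint (P i) (P j)) ∧
      (∀ i, ∀ x ∈ P i, (joinGraph (Fin (k * n ^ 2)) G).dist (Sum.inl (v i)) x ≤ 1) ∧
      (∀ i, (P i).card ≤ n ^ 2 + n) :=
  stmt5_general G n k hn D hD hdom
end

section
/- Let P' ⊆ {0,1}^{m+2} be a set of binary points each having at most n−1 nonzero coordinates and whose last two coordinates are zero, and let Δ ≥ 2√n. Then the closed ball of radius √2·Δ centered at the origin contains P' and also contains the four special points p₊₊, p₊₋, p₋₊, p₋₋ (with last two coordinates (±Δ, ±Δ) and other coordinates zero). Moreover, any ball containing all of P ∪ {p₊₊, p₊₋, p₋₊, p₋₋} has radius at least √2·Δ. -/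
/-- The point of `ℝ^{m+2}` whose first `m` coordinates are `0` and whose last two
coordinates are `a` and `b`. -/
noncomputable def specialPt (m : ℕ) (a b : ℝ) : EuclideanSpace ℝ (Fin (m + 2)) :=
  WithLp.toLp 2 (fun i : Fin (m + 2) => if (i : ℕ) = m then a else if (i : ℕ) = m + 1 then b else 0)

/-!
The origin is at distance `√(#ones) ≤ √n ≤ Δ/2` from every point of `P'` and at distance
`√2·Δ` from each special point. Conversely, `p₊₊` and `p₋₋` are at distance `2√2·Δ`, so by
the triangle inequality any ball containing both has radius at least `√2·Δ`.
-/

open Real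

lemma EuclideanSpace.norm_eq_sqrt_ncard_of_binary {ι : Type*} [Fintype ι]
    (x : EuclideanSpace ℝ ι) (hx : ∀ i, x i = 0 ∨ x i = 1) :
    ‖x‖ = √({i | x i ≠ 0}.ncard : ℝ) := by
  rw [EuclideanSpace.norm_eq, Set.ncard_eq_toFinset_card', Set.toFinset_ofPred,
    Finset.card_eq_sum_ones, Nat.cast_sum, Finset.sum_filter]
  congr 1
  refine Finset.sum_congr rfl fun i _ => ?_
  rcases hx i with h | h <;> simp [h]

lemma specialPt_sub (m : ℕ) (a b c d : ℝ) :
    specialPt m a b - specialPt m c d = specialPt m (a - c) (b - d) := by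
  ext i
  simp only [specialPt, PiLp.sub_apply, PiLp.toLp_apply]
  split_ifs <;> ring

lemma norm_specialPt (m : ℕ) (a b : ℝ) : ‖specialPt m a b‖ = √(a ^ 2 + b ^ 2) := by
  have hm : (⟨m, by omega⟩ : Fin (m + 2)) ≠ ⟨m + 1, by omega⟩ := by simp
  have hcoord (i : Fin (m + 2)) : ‖specialPt m a b i‖ ^ 2 =
      (if i = ⟨m, by omega⟩ then a ^ 2 else 0) + (if i = ⟨m + 1, by omega⟩ then b ^ 2 else 0) := by
    simp only [specialPt, PiLp.toLp_apply, Real.norm_eq_abs, sq_abs, Fin.ext_iff]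
    split_ifs <;> simp_all
  rw [EuclideanSpace.norm_eq, Finset.sum_congr rfl fun i _ => hcoord i, Finset.sum_add_distrib,
    Finset.sum_ite_eq', Finset.sum_ite_eq']
  simp

lemma norm_specialPt_of_abs_eq {m : ℕ} {a b Δ : ℝ} (ha : |a| = Δ) (hb : |b| = Δ) :
    ‖specialPt m a b‖ = √2 * Δ := by
  rw [norm_specialPt, ← sq_abs a, ← sq_abs b, ha, hb, ← two_mul, sqrt_mul zero_le_two,
    sqrt_sq (ha ▸ abs_nonneg a)]

theorem stmt10_general (m n : ℕ) (Δ : ℝ) (hΔ : 2 * Real.sqrt n ≤ Δ)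
    (P' : Set (EuclideanSpace ℝ (Fin (m + 2))))
    (hbin : ∀ p ∈ P', ∀ i : Fin (m + 2), p i = 0 ∨ p i = 1)
    (hsparse : ∀ p ∈ P', Set.ncard {i : Fin (m + 2) | p i ≠ 0} ≤ n - 1) :
    P' ⊆ Metric.closedBall 0 (Real.sqrt 2 * Δ) ∧
    (∀ a b : ℝ, (a = Δ ∨ a = -Δ) → (b = Δ ∨ b = -Δ) →
      specialPt m a b ∈ Metric.closedBall 0 (Real.sqrt 2 * Δ)) ∧
    (∀ (c : EuclideanSpace ℝ (Fin (m + 2))) (r : ℝ),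
      P' ∪ {specialPt m Δ Δ, specialPt m Δ (-Δ), specialPt m (-Δ) Δ, specialPt m (-Δ) (-Δ)}
        ⊆ Metric.closedBall c r → Real.sqrt 2 * Δ ≤ r) := by
  have hΔ0 : 0 ≤ Δ := le_trans (by positivity) hΔ
  have habs {a : ℝ} (ha : a = Δ ∨ a = -Δ) : |a| = Δ := by
    rcases ha with rfl | rfl <;> simp [hΔ0]
  refine ⟨fun p hp => ?_, fun a b ha hb => ?_, fun c r hsub => ?_⟩
  · have hcard : ({i | p i ≠ 0}.ncard : ℝ) ≤ n := by exact_mod_cast (hsparse p hp).trans (n.sub_le 1)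
    rw [mem_closedBall_zero_iff, EuclideanSpace.norm_eq_sqrt_ncard_of_binary p (hbin p hp)]
    calc √({i | p i ≠ 0}.ncard : ℝ) ≤ √n := sqrt_le_sqrt hcard
      _ ≤ Δ := by linarith [sqrt_nonneg (n : ℝ)]
      _ ≤ √2 * Δ := le_mul_of_one_le_left hΔ0 (one_le_sqrt.2 one_le_two)
  · rw [mem_closedBall_zero_iff, norm_specialPt_of_abs_eq (habs ha) (habs hb)]
  · have hpp : dist (specialPt m Δ Δ) c ≤ r := hsub (Or.inr (by simp))
    have hmm : dist (specialPt m (-Δ) (-Δ)) c ≤ r := hsub (Or.inr (by simp))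
    have hdiag : dist (specialPt m Δ Δ) (specialPt m (-Δ) (-Δ)) = 2 * (√2 * Δ) := by
      have h2Δ : |Δ - -Δ| = 2 * Δ := by rw [sub_neg_eq_add, ← two_mul, abs_of_nonneg (by positivity)]
      rw [dist_eq_norm, specialPt_sub, norm_specialPt_of_abs_eq h2Δ h2Δ]
      ring
    linarith [dist_triangle_right (specialPt m Δ Δ) (specialPt m (-Δ) (-Δ)) c]

/-- The ball `B(0, √2·Δ)` contains all binary points with at most `n−1` ones (and zero last
two coordinates) and the four special points; moreover any ball containing all of them has
radius at least `√2·Δ`. -/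
theorem stmt10 (m n : ℕ) (hn : 1 ≤ n) (Δ : ℝ) (hΔ : 2 * Real.sqrt n ≤ Δ)
    (P' : Set (EuclideanSpace ℝ (Fin (m + 2))))
    (hbin : ∀ p ∈ P', ∀ i : Fin (m + 2), p i = 0 ∨ p i = 1)
    (hsparse : ∀ p ∈ P', Set.ncard {i : Fin (m + 2) | p i ≠ 0} ≤ n - 1)
    (hlast : ∀ p ∈ P', ∀ i : Fin (m + 2), m ≤ (i : ℕ) → p i = 0) :
    P' ⊆ Metric.closedBall 0 (Real.sqrt 2 * Δ) ∧
    (∀ a b : ℝ, (a = Δ ∨ a = -Δ) → (b = Δ ∨ b = -Δ) →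
      specialPt m a b ∈ Metric.closedBall 0 (Real.sqrt 2 * Δ)) ∧
    (∀ (c : EuclideanSpace ℝ (Fin (m + 2))) (r : ℝ),
      P' ∪ {specialPt m Δ Δ, specialPt m Δ (-Δ), specialPt m (-Δ) Δ, specialPt m (-Δ) (-Δ)}
        ⊆ Metric.closedBall c r → Real.sqrt 2 * Δ ≤ r) :=
  stmt10_general m n Δ hΔ P' hbin hsparse
end

section
/- For all integers n ≥ 2, k with 1 ≤ k ≤ n, s with 1 ≤ s ≤ n−1, Δ with 2√n ≤ Δ ≤ α·n² for a constant α > 1, and A = (1 − 1/k)(s − 1): the inequality √2·Δ + √(A + 1/k²) > (√2·Δ + √A)·(1 + 1/(12·α·n⁵)) holds. -/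
set_option maxHeartbeats 800000


/-- The multiplicative gap inequality in the FPTAS-hardness proof:
`√2·Δ + √(A + 1/k²) > (√2·Δ + √A)·(1 + 1/(12·α·n⁵))` where `A = (1 − 1/k)(s − 1)`. -/
theorem stmt11 (α : ℝ) (hα : 1 < α) (n k s : ℕ)
    (hn : 2 ≤ n) (hk1 : 1 ≤ k) (hkn : k ≤ n) (hs1 : 1 ≤ s) (hsn : s ≤ n - 1)
    (Δ : ℝ) (hΔ1 : 2 * Real.sqrt n ≤ Δ) (hΔ2 : Δ ≤ α * n ^ 2)
    (A : ℝ) (hA : A = (1 - 1 / (k : ℝ)) * ((s : ℝ) - 1)) :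
    Real.sqrt 2 * Δ + Real.sqrt (A + 1 / (k : ℝ) ^ 2) >
      (Real.sqrt 2 * Δ + Real.sqrt A) * (1 + 1 / (12 * α * (n : ℝ) ^ 5)) := by
  set m : ℝ := (n : ℝ) with hm
  have hN : (2:ℝ) ≤ m := by rw [hm]; exact_mod_cast hn
  have hN0 : (0:ℝ) < m := by linarith
  have hk : (1:ℝ) ≤ (k:ℝ) := by exact_mod_cast hk1
  have hkN : (k:ℝ) ≤ m := by rw [hm]; exact_mod_cast hkn
  have hs : (1:ℝ) ≤ (s:ℝ) := by exact_mod_cast hs1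
  have hsN : (s:ℝ) ≤ m := by
    have h : s ≤ n := le_trans hsn (Nat.sub_le n 1)
    rw [hm]; exact_mod_cast h
  have hα0 : (0:ℝ) < α := by linarith
  have hik : (0:ℝ) < 1 / (k:ℝ) := by positivity
  have hik1 : 1 / (k:ℝ) ≤ 1 := by rw [div_le_one (by linarith)]; exact hk
  have hA0 : 0 ≤ A := by
    rw [hA]; apply mul_nonneg <;> linarith
  have hAn : A ≤ m := by
    rw [hA]
    have h1 : (1 - 1/(k:ℝ)) * ((s:ℝ) - 1) ≤ 1 * ((s:ℝ) - 1) :=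
      mul_le_mul_of_nonneg_right (by linarith) (by linarith)
    nlinarith
  -- sqrt facts
  have hsqm : Real.sqrt m ≤ m := by
    nlinarith [Real.sq_sqrt (le_of_lt hN0), Real.sqrt_nonneg m, sq_nonneg (Real.sqrt m - 1)]
  have hsA : Real.sqrt A ≤ m := le_trans (Real.sqrt_le_sqrt hAn) hsqm
  have hsA0 : 0 ≤ Real.sqrt A := Real.sqrt_nonneg A
  have hs2 : Real.sqrt 2 ≤ 1.5 := by
    nlinarith [Real.sq_sqrt (by norm_num : (0:ℝ) ≤ 2), Real.sqrt_nonneg 2]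
  have hs20 : 0 ≤ Real.sqrt 2 := Real.sqrt_nonneg 2
  have hΔ0 : 0 ≤ Δ := le_trans (by positivity) hΔ1
  have hmα : m ≤ α * m ^ 2 := by nlinarith
  have hden : (0:ℝ) < 12 * α * m ^ 5 := by positivity
  set c : ℝ := 1 / (12 * α * m ^ 5) with hc
  set t : ℝ := (Real.sqrt 2 * Δ + Real.sqrt A) * c with htd
  have hc0 : 0 < c := by positivity
  have ht0 : 0 ≤ t := by
    apply mul_nonneg _ (le_of_lt hc0)
    have : 0 ≤ Real.sqrt 2 * Δ := mul_nonneg hs20 hΔ0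
    linarith
  -- upper bound on t
  have hsum : Real.sqrt 2 * Δ + Real.sqrt A ≤ 3 * α * m ^ 2 := by
    have h1 : Real.sqrt 2 * Δ ≤ 1.5 * (α * m ^ 2) := by
      have := mul_le_mul hs2 hΔ2 hΔ0 (by norm_num)
      linarith
    linarith [hsA, hmα]
  have ht : t ≤ 1 / (4 * m ^ 3) := by
    have h1 : t ≤ 3 * α * m ^ 2 * c := mul_le_mul_of_nonneg_right hsum (le_of_lt hc0)
    have h2 : 3 * α * m ^ 2 * c = 1 / (4 * m ^ 3) := by
      rw [hc]; field_simp; ring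
    linarith
  have htm3 : t * m ^ 3 ≤ 1 / 4 := by
    have h1 : t * m ^ 3 ≤ (1 / (4 * m ^ 3)) * m ^ 3 :=
      mul_le_mul_of_nonneg_right ht (by positivity)
    have h2 : (1 / (4 * m ^ 3)) * m ^ 3 = 1 / 4 := by field_simp
    linarith
  -- key inequality: 2 t √A + t² < 1/k²
  have hkn2 : 1 / m ^ 2 ≤ 1 / (k:ℝ) ^ 2 := by
    have hk2 : (k:ℝ) ^ 2 ≤ m ^ 2 := by nlinarith
    have hk20 : (0:ℝ) < (k:ℝ) ^ 2 := by positivity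
    exact one_div_le_one_div_of_le hk20 hk2
  have hkey : 2 * t * Real.sqrt A + t ^ 2 < 1 / (k:ℝ) ^ 2 := by
    have h1 : t * Real.sqrt A * m ^ 2 ≤ t * m * m ^ 2 := by
      have := mul_le_mul_of_nonneg_left hsA ht0
      nlinarith [sq_nonneg m]
    have h2 : t * m * m ^ 2 = t * m ^ 3 := by ring
    have htm0 : 0 ≤ t * m := mul_nonneg ht0 (le_of_lt hN0)
    have hm4 : (0:ℝ) ≤ m ^ 2 - 4 := by nlinarith
    have htm : t * m ≤ 1 / 16 := by nlinarith [mul_nonneg htm0 hm4]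
    have h3 : (t * m) ^ 2 ≤ (1/16) ^ 2 := by nlinarith
    have h4 : (2 * t * Real.sqrt A + t ^ 2) * m ^ 2 < 1 := by nlinarith
    have h5 : 2 * t * Real.sqrt A + t ^ 2 < 1 / m ^ 2 := by
      rw [lt_div_iff₀ (by positivity)]; linarith
    linarith
  -- conclude
  have hmain : Real.sqrt A + t < Real.sqrt (A + 1 / (k:ℝ) ^ 2) := by
    rw [Real.lt_sqrt (by linarith)]
    have hsq : Real.sqrt A ^ 2 = A := Real.sq_sqrt hA0
    calc (Real.sqrt A + t) ^ 2 = Real.sqrt A ^ 2 + (2 * t * Real.sqrt A + t ^ 2) := by ring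
      _ = A + (2 * t * Real.sqrt A + t ^ 2) := by rw [hsq]
      _ < A + 1 / (k:ℝ) ^ 2 := by linarith
  have hrw : (Real.sqrt 2 * Δ + Real.sqrt A) * (1 + c) =
      Real.sqrt 2 * Δ + Real.sqrt A + t := by rw [htd]; ring
  rw [show (1:ℝ) + 1 / (12 * α * m ^ 5) = 1 + c from rfl, hrw]
  linarith
end
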